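/- arXiv:1112.2398 — 2 statements merged into one kernel-verified Lean document; each statement's English description precedes it below -/
import Mathlib

section
/- π(26861; 4, 1) − π(26861; 4, 3) = 1, i.e., at x = 26861 the Chebyshev bias δ(x,4) = π(x;4,3) − π(x;4,1) first becomes negative, taking the value −1. -/
/-!
Trial division by the primes below 167 decides primality below `167²`. With it, a scan along
`n = 1, …, 26860` that updates `π(n;4,3) − π(n;4,1)` one integer at a time is evaluated in the
kernel: the difference never drops below zero and is `0` at `26860`. Since `26861 ≡ 1 (mod 4)`
is prime, the difference is `−1` at `26861`.
-/

/-- Number of primes `p ≤ x` with `p ≡ a (mod q)`. -/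
noncomputable def primePiMod (x : ℝ) (q a : ℕ) : ℕ :=
  ((Finset.range (⌊x⌋₊ + 1)).filter (fun p => p.Prime ∧ p % q = a)).card

-- `π(n;q,a) − π(n;q,r)`; `Nat.count P (n + 1)` counts the `p ≤ n` with `P p`.
def primeRace (q a r n : ℕ) : ℤ :=
  Nat.count (fun p => p.Prime ∧ p % q = a) (n + 1) -
    Nat.count (fun p => p.Prime ∧ p % q = r) (n + 1)

theorem primePiMod_sub_primePiMod (x : ℝ) (q a r : ℕ) :
    (primePiMod x q a : ℤ) - primePiMod x q r = primeRace q a r ⌊x⌋₊ := by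
  simp only [primePiMod, primeRace, Nat.count_eq_card_filter_range]

theorem primeRace_zero (q a r : ℕ) : primeRace q a r 0 = 0 := by
  simp [primeRace, Nat.count_succ, Nat.not_prime_zero]

-- Written with `Nat.ble`, `Nat.blt` and `Nat.beq` rather than `decide`, which makes kernel
-- evaluation several times faster.
def trialDivision (ps : List ℕ) (p : ℕ) : Bool :=
  Nat.ble 2 p && ps.all fun q => Nat.blt p (q * q) || !Nat.beq (p % q) 0

theorem trialDivision_iff_prime {ps : List ℕ} {p : ℕ} (hone : 1 ∉ ps)
    (hps : ∀ q, q.Prime → q * q ≤ p → q ∈ ps) : trialDivision ps p = true ↔ p.Prime := by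
  simp only [trialDivision, Bool.and_eq_true, Nat.ble_eq, List.all_eq_true, Bool.or_eq_true,
    Nat.blt_eq, Bool.not_eq_true', Bool.eq_false_iff, Nat.beq_eq, ← Nat.dvd_iff_mod_eq_zero,
    ← not_le, ← not_and_or]
  constructor
  · rintro ⟨htwo, hdiv⟩
    by_contra hp
    have hmin := Nat.minFac_prime (show p ≠ 1 by omega)
    have hsq := Nat.minFac_sq_le_self (show 0 < p by omega) hp
    rw [sq] at hsq
    exact hdiv _ (hps _ hmin hsq) ⟨hsq, p.minFac_dvd⟩
  · rintro hp
    refine ⟨hp.two_le, fun q hq ⟨hle, hdvd⟩ => ?_⟩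
    rcases hp.eq_one_or_self_of_dvd q hdvd with rfl | rfl
    · exact hone hq
    · nlinarith [hp.two_le]

def smallPrimes : List ℕ :=
  [2, 3, 5, 7, 11, 13, 17, 19, 23, 29, 31, 37, 41, 43, 47, 53, 59, 61, 67, 71, 73, 79, 83, 89,
    97, 101, 103, 107, 109, 113, 127, 131, 137, 139, 149, 151, 157, 163]

theorem mem_smallPrimes_of_prime : ∀ q < 167, q.Prime → q ∈ smallPrimes := by
  decide +kernel

theorem trialDivision_smallPrimes_iff {p : ℕ} (hp : p < 167 * 167) :
    trialDivision smallPrimes p = true ↔ p.Prime :=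
  trialDivision_iff_prime (by decide) fun q hq hqp =>
    mem_smallPrimes_of_prime q (Nat.mul_self_lt_mul_self_iff.mp (hqp.trans_lt hp)) hq

def raceStep (isPrime : ℕ → Bool) (q a r m : ℕ) : ℤ :=
  bif Nat.beq (m % q) a then (bif isPrime m then 1 else 0)
  else bif Nat.beq (m % q) r then (bif isPrime m then -1 else 0) else 0

theorem primeRace_succ {isPrime : ℕ → Bool} {q a r n : ℕ} (har : a ≠ r)
    (h : isPrime (n + 1) = true ↔ (n + 1).Prime) :
    primeRace q a r (n + 1) = primeRace q a r n + raceStep isPrime q a r (n + 1) := by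
  have count_succ (b : ℕ) : (Nat.count (fun p => p.Prime ∧ p % q = b) (n + 2) : ℤ) =
      Nat.count (fun p => p.Prime ∧ p % q = b) (n + 1) +
        if (n + 1).Prime ∧ (n + 1) % q = b then 1 else 0 := by
    rw [Nat.count_succ]; push_cast; rfl
  simp only [primeRace, count_succ, raceStep, cond_eq_ite, Nat.beq_eq, ← h]
  split_ifs <;> simp_all <;> omega

-- Starting from the value `c` of the race at `n`, steps through `n + 1, …, n + k` and returns
-- the final value, or `none` as soon as the race drops below zero.
def raceScan (isPrime : ℕ → Bool) (q a r : ℕ) : ℕ → ℕ → ℕ → Option ℕ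
  | _, 0, c => some c
  | n, k + 1, c =>
    match (c : ℤ) + raceStep isPrime q a r (n + 1) with
    | Int.negSucc _ => none
    | Int.ofNat c' => raceScan isPrime q a r (n + 1) k c'

theorem primeRace_of_raceScan_eq_some {isPrime : ℕ → Bool} {q a r n k c c' : ℕ} (har : a ≠ r)
    (hprime : ∀ m, n < m → m ≤ n + k → (isPrime m = true ↔ m.Prime))
    (hc : (c : ℤ) = primeRace q a r n) (hscan : raceScan isPrime q a r n k c = some c') :
    (c' : ℤ) = primeRace q a r (n + k) ∧ ∀ m, n ≤ m → m ≤ n + k → 0 ≤ primeRace q a r m := by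
  induction k generalizing n c with
  | zero =>
    obtain rfl : c = c' := Option.some.inj hscan
    refine ⟨hc, fun m hnm hmn => ?_⟩
    obtain rfl : m = n := by omega
    exact hc ▸ Int.natCast_nonneg c
  | succ k ih =>
    have hstep := primeRace_succ (q := q) har (hprime (n + 1) (by omega) (by omega))
    rw [raceScan] at hscan
    rcases hnext : (c : ℤ) + raceStep isPrime q a r (n + 1) with c'' | _
    · rw [hnext] at hscan
      obtain ⟨hval, hnonneg⟩ := ih (n := n + 1) (c := c'')
        (fun m hm hm' => hprime m (by omega) (by omega))
        (by rw [hstep, ← hc]; exact hnext.symm) hscan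
      refine ⟨by rwa [Nat.add_right_comm] at hval, fun m hnm hmn => ?_⟩
      rcases hnm.eq_or_lt with rfl | hlt
      · exact hc ▸ Int.natCast_nonneg c
      · exact hnonneg m hlt (by omega)
    · simp [hnext] at hscan

theorem raceScan_four_three_one :
    raceScan (trialDivision smallPrimes) 4 3 1 0 26860 0 = some 0 := by
  decide +kernel

theorem primeRace_four_three_one :
    primeRace 4 3 1 26861 = -1 ∧ ∀ n ≤ 26860, 0 ≤ primeRace 4 3 1 n := by
  have hprime : ∀ m ≤ 26861, trialDivision smallPrimes m = true ↔ m.Prime :=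
    fun m hm => trialDivision_smallPrimes_iff (by omega)
  obtain ⟨hzero, hnonneg⟩ := primeRace_of_raceScan_eq_some (by decide)
    (fun m _ hm => hprime m (by omega)) (primeRace_zero 4 3 1).symm raceScan_four_three_one
  refine ⟨?_, fun n hn => hnonneg n n.zero_le hn⟩
  rw [primeRace_succ (by decide) (hprime 26861 le_rfl), ← hzero]
  decide

/-- At `x = 26861` the Chebyshev bias `δ(x,4) = π(x;4,3) − π(x;4,1)` first
becomes negative, taking the value `−1`, i.e. `π(26861;4,1) − π(26861;4,3) = 1`. -/
theorem chebyshev_bias_first_negative :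
    (primePiMod 26861 4 1 : ℤ) - primePiMod 26861 4 3 = 1 ∧
    ∀ x : ℝ, x < 26861 → 0 ≤ (primePiMod x 4 3 : ℤ) - primePiMod x 4 1 := by
  obtain ⟨hneg, hnonneg⟩ := primeRace_four_three_one
  refine ⟨?_, fun x hx => ?_⟩
  · have := primePiMod_sub_primePiMod 26861 4 3 1
    rw [Nat.floor_ofNat, hneg] at this
    linarith
  · rw [primePiMod_sub_primePiMod]
    exact hnonneg _ (Nat.lt_succ_iff.mp ((Nat.floor_lt' (by norm_num)).mpr hx))
end

section
/- For the modulus q = 13, the smallest prime x at which the averaged Chebyshev bias δ(x,13) = −Σ_a (a/13) π(x;13,a) is negative is x = 2083. -/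
instance : Fact (Nat.Prime 13) := ⟨by norm_num⟩

/-- The averaged Chebyshev bias `δ(x,p) = −Σ_a (a/p) π(x;p,a)` for an odd
prime modulus `p`. -/
noncomputable def chebyshevDelta (x : ℝ) (p : ℕ) [Fact p.Prime] : ℤ :=
  -∑ a ∈ Finset.Icc 1 (p - 1), legendreSym p (a : ℤ) * (primePiMod x p a : ℤ)

/-!
`δ(n, 13)` changes only at primes `n`, where it jumps by `-(n/13)`, so the theorem is a finite
computation: a single scan over `n ≤ 2083` that carries `δ(n, 13)` along and checks its sign.
For the kernel to run this scan quickly, primality is decided by trial division up to `√n` and the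
Legendre symbol is computed by Euler's criterion.
-/

open Finset

def nonnegScan (f : ℕ → ℤ) : ℕ → ℕ → ℤ → Option ℤ
  | 0, _, s => some s
  | k + 1, n, s => if 0 ≤ s then nonnegScan f k (n + 1) (s + f (n + 1)) else none

theorem eq_and_nonneg_of_nonnegScan_eq_some {S f : ℕ → ℤ} (hS : ∀ n, S (n + 1) = S n + f (n + 1))
    {k n : ℕ} {t : ℤ} (h : nonnegScan f k n (S n) = some t) :
    S (n + k) = t ∧ ∀ m, n ≤ m → m < n + k → 0 ≤ S m := by
  induction k generalizing n with
  | zero => exact ⟨Option.some.inj h, fun m h₁ h₂ => by omega⟩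
  | succ k ih =>
    rw [nonnegScan, ← hS] at h
    split_ifs at h with hn
    obtain ⟨hend, hnonneg⟩ := ih h
    refine ⟨by rwa [← add_assoc, add_right_comm], fun m h₁ h₂ => ?_⟩
    rcases h₁.eq_or_lt with rfl | h₁
    · exact hn
    · exact hnonneg m h₁ (by omega)

def legendreSymByEuler (p a : ℕ) : ℤ :=
  if a % p = 0 then 0 else if a ^ (p / 2) % p = 1 then 1 else -1

theorem legendreSym_natCast_eq_legendreSymByEuler (p : ℕ) [Fact p.Prime] (a : ℕ) :
    legendreSym p a = legendreSymByEuler p a := by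
  have hzero : (a : ZMod p) = 0 ↔ a % p = 0 := by
    rw [ZMod.natCast_eq_zero_iff, Nat.dvd_iff_mod_eq_zero]
  have hpow : (a : ZMod p) ^ (p / 2) = 1 ↔ a ^ (p / 2) % p = 1 := by
    rw [← Nat.cast_pow, ← ZMod.natCast_mod, ← Nat.cast_one, ZMod.natCast_eq_natCast_iff',
      Nat.mod_mod, Nat.one_mod_eq_one.mpr (Fact.out : p.Prime).one_lt.ne']
  unfold legendreSymByEuler
  split_ifs with h0 h1
  · rwa [legendreSym.eq_zero_iff, Int.cast_natCast, hzero]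
  · rwa [legendreSym.eq_one_iff' p (hzero.not.mpr h0), ZMod.euler_criterion p (hzero.not.mpr h0),
      hpow]
  · rwa [legendreSym.eq_neg_one_iff', ZMod.euler_criterion p (hzero.not.mpr h0), hpow]

abbrev Nat.decidablePrimeBySqrt (n : ℕ) : Decidable n.Prime :=
  decidable_of_iff' _ Nat.prime_def_le_sqrt

section
attribute [local instance] Nat.decidablePrimeBySqrt

def biasJump (p n : ℕ) : ℤ :=
  if n.Prime then -legendreSymByEuler p n else 0

end

theorem primePiMod_zero (q a : ℕ) : primePiMod 0 q a = 0 := by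
  simp [primePiMod, Nat.not_prime_zero]

theorem primePiMod_natCast_succ (n q a : ℕ) :
    primePiMod ((n + 1 : ℕ) : ℝ) q a =
      primePiMod (n : ℝ) q a + if (n + 1).Prime ∧ (n + 1) % q = a then 1 else 0 := by
  unfold primePiMod
  rw [Nat.floor_natCast, Nat.floor_natCast, range_add_one, filter_insert]
  split_ifs
  · exact card_insert_of_notMem (by simp)
  · rfl

section
variable {p : ℕ} [Fact p.Prime]

theorem chebyshevDelta_zero : chebyshevDelta 0 p = 0 := by
  simp [chebyshevDelta, primePiMod_zero]

theorem sum_legendreSym_mul_ite_mod_eq (m : ℕ) :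
    ∑ a ∈ Icc 1 (p - 1), legendreSym p (a : ℤ) * (if m % p = a then 1 else 0) =
      legendreSym p m := by
  simp only [mul_ite, mul_one, mul_zero, sum_ite_eq]
  rw [legendreSym.mod p m, ← Int.natCast_mod]
  split_ifs with h
  · rfl
  · have : m % p < p := Nat.mod_lt m (Fact.out : p.Prime).pos
    rw [show m % p = 0 by simp at h; omega]
    simp

theorem chebyshevDelta_natCast_succ (n : ℕ) :
    chebyshevDelta ((n + 1 : ℕ) : ℝ) p = chebyshevDelta (n : ℝ) p + biasJump p (n + 1) := by
  simp only [chebyshevDelta, primePiMod_natCast_succ]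
  push_cast
  simp only [mul_add, sum_add_distrib, neg_add]
  congr 1
  by_cases hn : (n + 1).Prime
  · simp only [biasJump, hn, true_and, if_true]
    rw [sum_legendreSym_mul_ite_mod_eq, legendreSym_natCast_eq_legendreSymByEuler]
  · simp [biasJump, hn]

end

theorem nonnegScan_biasJump_thirteen : nonnegScan (biasJump 13) 2083 0 0 = some (-1) := by
  decide +kernel

/-- For the modulus `q = 13`, the smallest prime `x` with `δ(x,13) < 0`
is `x = 2083`. -/
theorem chebyshev_bias_thirteen_first_negative :
    Nat.Prime 2083 ∧ chebyshevDelta 2083 13 < 0 ∧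
    ∀ x : ℕ, x.Prime → x < 2083 → 0 ≤ chebyshevDelta x 13 := by
  obtain ⟨h2083, hbelow⟩ := eq_and_nonneg_of_nonnegScan_eq_some
    (S := fun n : ℕ => chebyshevDelta n 13) (n := 0) chebyshevDelta_natCast_succ
    (by simpa [chebyshevDelta_zero] using nonnegScan_biasJump_thirteen)
  refine ⟨by norm_num, ?_, fun x _ hx => hbelow x x.zero_le hx⟩
  simpa using h2083.trans_lt (show (-1 : ℤ) < 0 by norm_num)
end
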